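/- Let B = ⟨a, b ∣ a b a⁻¹ b = 1⟩ be the Klein bottle group and let A be the subgroup of B generated by a² and b. Then every automorphism φ of B maps A onto A, i.e. φ(A) = A. -/

import Mathlib

/-!
The elements of `B` conjugate to their own inverse are exactly the powers of `b`: writing
`x = bⁿ aᵐ`, the `a`-exponent `m` is a homomorphism to `ℤ`, so `x ~ x⁻¹` forces `m = -m`.
The centralizer of `b` is `A`, since `aᵐ b a⁻ᵐ = b^((-1)ᵐ)` and `b` has infinite order.
Hence `A` is the centralizer of the automorphism-invariant set `{x | x ~ x⁻¹}`, so it is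
characteristic. Normal forms are compared in the model `ℤ ⋊ ℤ`, where `a` acts on `⟨b⟩ ≅ ℤ`
by negation.
-/

/-- The single relator `a * b * a⁻¹ * b` of the Klein bottle group,
where `a = FreeGroup.of 0` and `b = FreeGroup.of 1`. -/
def kleinBottleRels : Set (FreeGroup (Fin 2)) :=
  {FreeGroup.of 0 * FreeGroup.of 1 * (FreeGroup.of 0)⁻¹ * FreeGroup.of 1}

/-- The Klein bottle group `B = ⟨a, b ∣ a b a⁻¹ b = 1⟩`. -/
abbrev KleinBottleGroup : Type := PresentedGroup kleinBottleRels

/-- The generator `a` of the Klein bottle group. -/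
def kleinA : KleinBottleGroup := PresentedGroup.of 0

/-- The generator `b` of the Klein bottle group. -/
def kleinB : KleinBottleGroup := PresentedGroup.of 1

/-- The index-two subgroup `A = ⟨a², b⟩` of the Klein bottle group. -/
def kleinTorusSubgroup : Subgroup KleinBottleGroup :=
  Subgroup.closure {kleinA ^ 2, kleinB}

open SemidirectProduct

theorem Subgroup.characteristic_centralizer_setOf_isConj_inv (G : Type*) [Group G] :
    (Subgroup.centralizer {x : G | IsConj x x⁻¹}).Characteristic := by
  refine Subgroup.characteristic_iff_le_comap.mpr fun ϕ g hg x hx => ϕ.symm.injective ?_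
  have hx' : IsConj (ϕ.symm x) (ϕ.symm x)⁻¹ := by simpa using (ϕ.symm : G →* G).map_isConj hx
  simpa using hg _ hx'

section InvertingConjugation

variable {G : Type*} [Group G] {c x : G}

theorem mul_zpow_eq_zpow_neg_mul (h : c * x * c⁻¹ = x⁻¹) (n : ℤ) : c * x ^ n = x ^ (-n) * c := by
  have := map_zpow (MulAut.conj c) x n
  rw [MulAut.conj_apply, MulAut.conj_apply, h, inv_zpow'] at this
  rw [← this]
  group

theorem inv_mul_zpow_eq_zpow_neg_mul (h : c * x * c⁻¹ = x⁻¹) (n : ℤ) :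
    c⁻¹ * x ^ n = x ^ (-n) * c⁻¹ := by
  rw [inv_mul_eq_iff_eq_mul, ← mul_assoc, mul_zpow_eq_zpow_neg_mul h, neg_neg,
    mul_inv_cancel_right]

theorem commute_sq_of_mul_mul_inv_eq_inv (h : c * x * c⁻¹ = x⁻¹) : Commute (c ^ 2) x := by
  have h₁ : c * x = x⁻¹ * c := by simpa using mul_zpow_eq_zpow_neg_mul h 1
  have h₂ : c * x⁻¹ = x * c := by simpa using mul_zpow_eq_zpow_neg_mul h (-1)
  calc c ^ 2 * x = c * (c * x) := by rw [pow_two, mul_assoc]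
    _ = x * c ^ 2 := by rw [h₁, ← mul_assoc, h₂, mul_assoc, ← pow_two]

end InvertingConjugation

def signAction : Multiplicative ℤ →* MulAut (Multiplicative ℤ) :=
  zpowersHom _ (MulEquiv.inv _)

theorem signAction_apply (m x : Multiplicative ℤ) :
    signAction m x = x ^ (m.toAdd.negOnePow : ℤ) := by
  rw [signAction, zpowersHom_apply]
  induction m.toAdd using Int.induction_on with
  | zero => simp
  | succ k ih =>
    rw [zpow_add_one, MulAut.mul_apply, MulEquiv.inv_apply, map_inv, ih, Int.negOnePow_succ,
      Units.val_neg, zpow_neg]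
  | pred k ih =>
    rw [zpow_sub_one, MulAut.mul_apply, MulAut.inv_def, MulEquiv.inv_symm, MulEquiv.inv_apply,
      map_inv, ih, Int.negOnePow_sub, Int.negOnePow_one, mul_neg_one, Units.val_neg, zpow_neg]

abbrev KleinModel : Type := Multiplicative ℤ ⋊[signAction] Multiplicative ℤ

theorem KleinModel.even_right_of_commute_inl_ofAdd_one {k : KleinModel}
    (h : Commute k (inl (Multiplicative.ofAdd 1))) : Even k.right.toAdd := by
  have hleft := congrArg (Multiplicative.toAdd ∘ SemidirectProduct.left) h.eq
  simp only [Function.comp_apply, mul_left, left_inl, right_inl, map_one, MulAut.one_apply,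
    signAction_apply, toAdd_mul, toAdd_zpow, toAdd_ofAdd, smul_eq_mul, mul_one] at hleft
  rw [← Int.negOnePow_eq_one_iff, ← Units.val_eq_one]
  omega

theorem kleinA_mul_kleinB_mul_inv : kleinA * kleinB * kleinA⁻¹ = kleinB⁻¹ :=
  eq_inv_of_mul_eq_one_left <| (QuotientGroup.eq_one_iff _).mpr <|
    Subgroup.subset_normalClosure rfl

theorem isConj_kleinB_inv : IsConj kleinB kleinB⁻¹ :=
  isConj_iff.mpr ⟨kleinA, kleinA_mul_kleinB_mul_inv⟩

theorem exists_eq_kleinB_zpow_mul_kleinA_zpow (g : KleinBottleGroup) :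
    ∃ n m : ℤ, g = kleinB ^ n * kleinA ^ m := by
  have hg : g ∈ Subgroup.closure (Set.range PresentedGroup.of) := by simp
  induction hg using Subgroup.closure_induction_left with
  | one => exact ⟨0, 0, by simp⟩
  | mul_left s hs y _ ih =>
    obtain ⟨i, rfl⟩ := hs
    obtain ⟨n, m, rfl⟩ := ih
    fin_cases i
    · refine ⟨-n, m + 1, ?_⟩
      change kleinA * _ = _
      rw [← mul_assoc, mul_zpow_eq_zpow_neg_mul kleinA_mul_kleinB_mul_inv, zpow_add_one]
      group
    · exact ⟨n + 1, m, by change kleinB * _ = _; group⟩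
  | inv_mul_cancel s hs y _ ih =>
    obtain ⟨i, rfl⟩ := hs
    obtain ⟨n, m, rfl⟩ := ih
    fin_cases i
    · refine ⟨-n, m - 1, ?_⟩
      change kleinA⁻¹ * _ = _
      rw [← mul_assoc, inv_mul_zpow_eq_zpow_neg_mul kleinA_mul_kleinB_mul_inv, zpow_sub_one]
      group
    · exact ⟨n - 1, m, by change kleinB⁻¹ * _ = _; group⟩

def kleinModelGen : Fin 2 → KleinModel :=
  ![inr (Multiplicative.ofAdd 1), inl (Multiplicative.ofAdd 1)]

theorem lift_kleinModelGen_eq_one :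
    ∀ r ∈ kleinBottleRels, FreeGroup.lift kleinModelGen r = 1 := by
  rintro r rfl
  ext <;> simp [kleinModelGen, signAction_apply]

def toKleinModel : KleinBottleGroup →* KleinModel :=
  PresentedGroup.toGroup lift_kleinModelGen_eq_one

theorem toKleinModel_kleinA : toKleinModel kleinA = inr (Multiplicative.ofAdd 1) :=
  PresentedGroup.toGroup.of _

theorem toKleinModel_kleinB : toKleinModel kleinB = inl (Multiplicative.ofAdd 1) :=
  PresentedGroup.toGroup.of _

theorem right_toKleinModel_kleinB_zpow_mul_kleinA_zpow (n m : ℤ) :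
    (toKleinModel (kleinB ^ n * kleinA ^ m)).right = Multiplicative.ofAdd m := by
  change rightHom _ = _
  simp only [map_mul, map_zpow, toKleinModel_kleinA, toKleinModel_kleinB, rightHom_inl,
    rightHom_inr, one_zpow, one_mul, ← ofAdd_zsmul, smul_eq_mul, mul_one]

theorem exists_eq_kleinB_zpow_of_isConj_inv {x : KleinBottleGroup} (hx : IsConj x x⁻¹) :
    ∃ n : ℤ, x = kleinB ^ n := by
  obtain ⟨n, m, rfl⟩ := exists_eq_kleinB_zpow_mul_kleinA_zpow x
  have h := (rightHom.comp toKleinModel).map_isConj hx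
  rw [isConj_iff_eq, map_inv, MonoidHom.comp_apply, rightHom_eq_right,
    right_toKleinModel_kleinB_zpow_mul_kleinA_zpow] at h
  obtain rfl : m = 0 := by
    have := congrArg Multiplicative.toAdd h
    simp only [toAdd_ofAdd, toAdd_inv] at this
    omega
  exact ⟨n, by simp⟩

theorem centralizer_kleinB_le : Subgroup.centralizer {kleinB} ≤ kleinTorusSubgroup := by
  intro g hg
  obtain ⟨n, m, rfl⟩ := exists_eq_kleinB_zpow_mul_kleinA_zpow g
  have hcomm : Commute (toKleinModel (kleinB ^ n * kleinA ^ m)) (inl (Multiplicative.ofAdd 1)) :=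
    toKleinModel_kleinB ▸ Commute.map (Subgroup.mem_centralizer_singleton_iff.mp hg) toKleinModel
  obtain ⟨k, rfl⟩ := right_toKleinModel_kleinB_zpow_mul_kleinA_zpow n m ▸
    KleinModel.even_right_of_commute_inl_ofAdd_one hcomm
  rw [← two_mul, zpow_mul, zpow_ofNat]
  exact mul_mem (zpow_mem (Subgroup.subset_closure (by simp)) n)
    (zpow_mem (Subgroup.subset_closure (by simp)) k)

theorem kleinTorusSubgroup_eq_centralizer :
    kleinTorusSubgroup = Subgroup.centralizer {x | IsConj x x⁻¹} := by
  apply le_antisymm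
  · rw [kleinTorusSubgroup, Subgroup.closure_le]
    rintro g (rfl | rfl) x hx <;> obtain ⟨n, rfl⟩ := exists_eq_kleinB_zpow_of_isConj_inv hx
    · exact ((commute_sq_of_mul_mul_inv_eq_inv kleinA_mul_kleinB_mul_inv).zpow_right n).symm.eq
    · exact ((Commute.refl kleinB).zpow_left n).eq
  · exact (Subgroup.centralizer_le (by simpa using isConj_kleinB_inv)).trans centralizer_kleinB_le

/-- Every automorphism of the Klein bottle group preserves the subgroup `A = ⟨a², b⟩`. -/
theorem kleinBottle_aut_preserves_A (φ : KleinBottleGroup ≃* KleinBottleGroup) :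
    Subgroup.map (φ : KleinBottleGroup →* KleinBottleGroup) kleinTorusSubgroup
      = kleinTorusSubgroup := by
  have hchar : kleinTorusSubgroup.Characteristic := by
    rw [kleinTorusSubgroup_eq_centralizer]
    exact Subgroup.characteristic_centralizer_setOf_isConj_inv _
  exact Subgroup.characteristic_iff_map_eq.mp hchar φ
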